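/- arXiv:2506.06163 — 4 statements merged into one kernel-verified Lean document; each statement's English description precedes it below -/
import Mathlib

section
/- For every positive integer n there exists c ∈ [−2, 0] such that 0 is a periodic point of least period n of the real quadratic map f_c(x) = x² + c. -/
open Set

/-- The Sharkovsky ordering `n >₂ m`: writing `n = 2^a·p`, `m = 2^b·q` with `p, q` odd,
`n >₂ m` iff `(p>1 ∧ q>1 ∧ (a<b ∨ (a=b ∧ p>q))) ∨ (p>1 ∧ q=1) ∨ (p=1 ∧ q=1 ∧ a>b)`. -/
def SharkGt (n m : ℕ) : Prop :=
  ∃ a p b q : ℕ, Odd p ∧ Odd q ∧ n = 2 ^ a * p ∧ m = 2 ^ b * q ∧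
    ((1 < p ∧ 1 < q ∧ (a < b ∨ (a = b ∧ q < p))) ∨
     (1 < p ∧ q = 1) ∨
     (p = 1 ∧ q = 1 ∧ b < a))

/-- The `k`-Sharkovsky ordering `n >_k m`. -/
def SharkGtK (k n m : ℕ) : Prop :=
  (m = 1 ∧ 1 < n) ∨
  (k ∣ n ∧ k ∣ m ∧ SharkGt (n / k) (m / k)) ∨
  (¬ k ∣ n ∧ ∃ i j : ℕ, 1 ≤ j ∧ m = i * n + j * k)

/-- `m ≤_k n` iff `m = n` or `n >_k m`. -/
def SharkLeK (k m n : ℕ) : Prop := m = n ∨ SharkGtK k n m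

/-- `x` is a periodic point of least period `n` for `f`. -/
def IsLeastPeriodicPt {α : Type*} (f : α → α) (n : ℕ) (x : α) : Prop :=
  f^[n] x = x ∧ ∀ j, 1 ≤ j → j < n → f^[j] x ≠ x

/-- The set of least periods of periodic points of `f`. -/
def Per {α : Type*} (f : α → α) : Set ℕ :=
  {n | 0 < n ∧ ∃ x, IsLeastPeriodicPt f n x}

/-- The set of least periods of periodic points of `f` lying in `s`. -/
def PerOn {α : Type*} (f : α → α) (s : Set α) : Set ℕ :=
  {n | 0 < n ∧ ∃ x ∈ s, IsLeastPeriodicPt f n x}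

/-- The points `p 0, …, p (n-1)` are arranged along the line as
`p_{n-1} < p_{n-3} < ⋯ < p₂ < p₀ < p₁ < p₃ < ⋯ < p_{n-2}` (for odd `n ≥ 3`). -/
def StefanOrder (n : ℕ) (p : ℕ → ℝ) : Prop :=
  p 0 < p 1 ∧
  (∀ i, 2 * i + 2 ≤ n - 1 → p (2 * i + 2) < p (2 * i)) ∧
  (∀ i, 2 * i + 3 ≤ n - 2 → p (2 * i + 1) < p (2 * i + 3))

/-- `p 0, …, p (n-1)` form a periodic orbit of `f` (of `n` distinct points) which is
a Štefan cycle: arranged in the Štefan order or in exactly the reverse order. -/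
def IsStefanCycle (f : ℝ → ℝ) (n : ℕ) (p : ℕ → ℝ) : Prop :=
  (∀ i, i + 1 < n → f (p i) = p (i + 1)) ∧ f (p (n - 1)) = p 0 ∧
  (∀ i, i < n → ∀ j, j < n → i ≠ j → p i ≠ p j) ∧
  (StefanOrder n p ∨ StefanOrder n fun i => -(p i))

/-- The point at radius `r` on leg `j` of the `k`-star. -/
noncomputable def legPt (k j : ℕ) (r : ℝ) : ℂ :=
  (r : ℂ) * Complex.exp (2 * Real.pi * Complex.I * j / k)

/-- The `k`-star: `k` unit segments meeting at `0 ∈ ℂ`. -/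
def kStar (k : ℕ) : Set ℂ :=
  {z | ∃ r ∈ Icc (0 : ℝ) 1, ∃ j < k, z = legPt k j r}

/-- The `i`-Sharkovsky relation, specializing to the classical ordering for `i = 2`. -/
def SharkRel (i : ℕ) (n m : ℕ) : Prop :=
  if i = 2 then SharkGt n m else SharkGtK i n m

/-- `S` is a tail of the `i`-Sharkovsky ordering. -/
def IsTail (i : ℕ) (S : Set ℕ) : Prop :=
  (∀ s ∈ S, 0 < s) ∧ ∀ s ∈ S, ∀ t, 0 < t → SharkRel i s t → t ∈ S

/-- `p 1, …, p n` is a spiral cycle of period `n` for `f` on the `k`-star. -/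
def IsSpiralCycle (k n : ℕ) (p : ℕ → ℂ) (f : ℂ → ℂ) : Prop :=
  (∀ i, 1 ≤ i → i < n → f (p i) = p (i + 1)) ∧ f (p n) = p 1 ∧
  (∀ i, 1 ≤ i → i ≤ n → ∀ j, 1 ≤ j → j ≤ n → i ≠ j → p i ≠ p j) ∧
  ∃ r : ℕ → ℝ,
    (∀ i, 1 ≤ i → i ≤ n → r i ∈ Ioo (0 : ℝ) 1 ∧ p i = legPt k (i % k) (r i)) ∧
    ∀ i, 1 ≤ i → i + k ≤ n → r i < r (i + k)

/-- The smallest subtree of the `k`-star containing `0` and the points `p 1, …, p n`. -/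
def spiralTree (n : ℕ) (p : ℕ → ℂ) : Set ℂ :=
  ⋃ i ∈ Finset.Icc 1 n, segment ℝ (0 : ℂ) (p i)

/-- The vertex set `{0, p 1, …, p n}`. -/
def spiralVerts (n : ℕ) (p : ℕ → ℂ) : Set ℂ :=
  insert (0 : ℂ) (p '' Icc 1 n)

/-- `f` is a spiral graph on the tree spanned by a spiral cycle `p 1, …, p n`:
`f 0 = 0`, `f` realizes the spiral cycle, is continuous on the tree, maps it into itself,
and is injective on (hence maps homeomorphically) each edge, i.e. on the closure of each
connected component of the tree minus its vertices. -/
def IsSpiralGraph (k n : ℕ) (p : ℕ → ℂ) (f : ℂ → ℂ) : Prop :=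
  IsSpiralCycle k n p f ∧ f 0 = 0 ∧
  ContinuousOn f (spiralTree n p) ∧
  MapsTo f (spiralTree n p) (spiralTree n p) ∧
  ∀ x ∈ spiralTree n p \ spiralVerts n p,
    InjOn f (closure (connectedComponentIn (spiralTree n p \ spiralVerts n p) x))

/-- `E` is an edge of the tree `T` with vertex set `V`: the closure of a connected
component of `T \ V`. -/
def IsEdgeOf (T V : Set ℂ) (E : Set ℂ) : Prop :=
  ∃ x ∈ T \ V, E = closure (connectedComponentIn (T \ V) x)

/-- Arc of the Markov graph of `f` on the tree `T` with vertices `V`: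
from edge `E` to edge `E'` iff `f (E) ⊇ E'`. -/
def MarkovArc (f : ℂ → ℂ) (T V : Set ℂ) (E E' : Set ℂ) : Prop :=
  IsEdgeOf T V E ∧ IsEdgeOf T V E' ∧ E' ⊆ f '' E

/-- `w 0, w 1, …, w m = w 0` is a closed walk of length `m` in the Markov graph. -/
def IsClosedWalk (f : ℂ → ℂ) (T V : Set ℂ) (m : ℕ) (w : ℕ → Set ℂ) : Prop :=
  (∀ j < m, MarkovArc f T V (w j) (w (j + 1))) ∧ w m = w 0

/-- The closed walk of length `m` is not a concatenation of copies of a shorter closed walk. -/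
def Nonrepetitive (m : ℕ) (w : ℕ → Set ℂ) : Prop :=
  ¬ ∃ d, 0 < d ∧ d < m ∧ d ∣ m ∧ ∀ j, j + d ≤ m → w (j + d) = w j

/-- The closed arc `{r·exp(2πij/k) : r ∈ [s,t]}` inside leg `j` of the `k`-star. -/
def legArc (k j : ℕ) (s t : ℝ) : Set ℂ :=
  {z | ∃ r ∈ Icc s t, z = legPt k j r}

/-- The critical orbit polynomial: `Q n c = f_c^[n] 0`. -/
def Qcrit (n : ℕ) (c : ℝ) : ℝ := (fun x : ℝ => x ^ 2 + c)^[n] 0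

lemma Qcrit_zero (c : ℝ) : Qcrit 0 c = 0 := rfl

lemma Qcrit_succ (n : ℕ) (c : ℝ) : Qcrit (n + 1) c = (Qcrit n c) ^ 2 + c := by
  rw [Qcrit, Function.iterate_succ_apply']; rfl

lemma Qcrit_continuous (n : ℕ) : Continuous fun c => Qcrit n c := by
  induction n with
  | zero => simpa [Qcrit_zero] using continuous_const
  | succ n ih =>
      have : (fun c => Qcrit (n + 1) c) = fun c => (Qcrit n c) ^ 2 + c := by
        funext c; exact Qcrit_succ n c
      rw [this]; exact (ih.pow 2).add continuous_id

lemma Qcrit_one (c : ℝ) : Qcrit 1 c = c := by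
  rw [Qcrit_succ, Qcrit_zero]; ring

lemma Qcrit_neg_two {n : ℕ} (hn : 2 ≤ n) : Qcrit n (-2) = 2 := by
  induction n with
  | zero => omega
  | succ n ih =>
      rcases Nat.lt_or_ge n 2 with h | h
      · interval_cases n
        · omega
        · rw [Qcrit_succ, Qcrit_one]; norm_num
      · rw [Qcrit_succ, ih h]; norm_num

/-- Roots of `Qcrit n` in `[-2, 0]`. -/
def QcritRoots (n : ℕ) : Set ℝ := {c | c ∈ Icc (-2 : ℝ) 0 ∧ Qcrit n c = 0}

lemma QcritRoots_isCompact (n : ℕ) : IsCompact (QcritRoots n) := by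
  have hclosed : IsClosed (QcritRoots n) := by
    have : QcritRoots n = Icc (-2 : ℝ) 0 ∩ (fun c => Qcrit n c) ⁻¹' {0} := by
      ext c; simp [QcritRoots]
    rw [this]
    exact isClosed_Icc.inter (isClosed_singleton.preimage (Qcrit_continuous n))
  exact isCompact_Icc.of_isClosed_subset hclosed fun c hc => hc.1

lemma QcritRoots_exists_least {n : ℕ} (h : (QcritRoots n).Nonempty) :
    ∃ m, IsLeast (QcritRoots n) m :=
  (QcritRoots_isCompact n).exists_isLeast h

lemma isLeast_roots_one : IsLeast (QcritRoots 1) 0 := by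
  constructor
  · exact ⟨⟨by norm_num, le_refl 0⟩, Qcrit_one 0⟩
  · intro c hc
    have := hc.2
    rw [Qcrit_one] at this
    exact this.ge

/-- The key induction: the least root of `Qcrit n` exists and is strictly smaller than the
least root of each `Qcrit j` for `1 ≤ j < n`. -/
lemma Qcrit_key : ∀ n, 1 ≤ n → ∃ m, IsLeast (QcritRoots n) m ∧
    ∀ j, 1 ≤ j → j < n → ∀ mj, IsLeast (QcritRoots j) mj → m < mj := by
  intro n hn
  induction n, hn using Nat.le_induction with
  | base => exact ⟨0, isLeast_roots_one, fun j hj hj' => by omega⟩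
  | succ n hn ih =>
      obtain ⟨m, hm, hlt⟩ := ih
      rcases Nat.lt_or_ge n 2 with h2 | h2
      · -- n = 1, prove for n + 1 = 2 directly using the root -1
        have hn1 : n = 1 := by omega
        subst hn1
        have hroot : (-1 : ℝ) ∈ QcritRoots 2 := by
          refine ⟨⟨by norm_num, by norm_num⟩, ?_⟩
          rw [show (2 : ℕ) = 1 + 1 from rfl, Qcrit_succ, Qcrit_one]; norm_num
        obtain ⟨m2, hm2⟩ := QcritRoots_exists_least ⟨-1, hroot⟩
        refine ⟨m2, hm2, ?_⟩
        intro j hj hj' mj hmj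
        have hj1 : j = 1 := by omega
        subst hj1
        have : mj = 0 := hmj.unique isLeast_roots_one
        have hle : m2 ≤ -1 := hm2.2 hroot
        linarith
      · -- n ≥ 2 : IVT between -2 and m
        have hm0 : m < 0 := hlt 1 le_rfl (by omega) 0 isLeast_roots_one
        have hmIcc : m ∈ Icc (-2 : ℝ) 0 := hm.1.1
        have hQm : Qcrit (n + 1) m = m := by
          rw [Qcrit_succ, hm.1.2]; ring
        have hQ2 : Qcrit (n + 1) (-2) = 2 := Qcrit_neg_two (by omega)
        have hab : (-2 : ℝ) ≤ m := hmIcc.1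
        have hcont : ContinuousOn (fun c => Qcrit (n + 1) c) (Icc (-2 : ℝ) m) :=
          (Qcrit_continuous (n + 1)).continuousOn
        have hmem : (0 : ℝ) ∈ Icc (Qcrit (n + 1) m) (Qcrit (n + 1) (-2)) := by
          rw [hQm, hQ2]; exact ⟨hm0.le, by norm_num⟩
        obtain ⟨c, hcIcc, hc0⟩ := intermediate_value_Icc' hab hcont hmem
        have hc0' : Qcrit (n + 1) c = 0 := hc0
        have hcm : c < m := by
          rcases lt_or_eq_of_le hcIcc.2 with h | h
          · exact h
          · exfalso; rw [h, hQm] at hc0'; exact absurd hc0' hm0.ne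
        have hcroot : c ∈ QcritRoots (n + 1) :=
          ⟨⟨hcIcc.1, hcIcc.2.trans hmIcc.2⟩, hc0'⟩
        obtain ⟨m', hm'⟩ := QcritRoots_exists_least ⟨c, hcroot⟩
        refine ⟨m', hm', ?_⟩
        intro j hj hj' mj hmj
        have hm'c : m' ≤ c := hm'.2 hcroot
        rcases Nat.lt_or_ge j n with hjn | hjn
        · exact lt_trans (lt_of_le_of_lt hm'c hcm) (hlt j hj hjn mj hmj)
        · have : j = n := by omega
          subst this
          have : mj = m := hmj.unique hm
          rw [this]; exact lt_of_le_of_lt hm'c hcm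

/-- For every positive integer `n` there is `c ∈ [-2, 0]` such that `0` is a periodic point
of least period `n` of `x ↦ x² + c`. -/
theorem exists_superstable_param (n : ℕ) (hn : 0 < n) :
    ∃ c ∈ Icc (-2 : ℝ) 0, IsLeastPeriodicPt (fun x : ℝ => x ^ 2 + c) n 0 := by
  obtain ⟨m, hm, hlt⟩ := Qcrit_key n hn
  refine ⟨m, hm.1.1, hm.1.2, ?_⟩
  intro j hj hj' hQj
  have hmj : m ∈ QcritRoots j := ⟨hm.1.1, hQj⟩
  obtain ⟨mj, hmjL⟩ := QcritRoots_exists_least ⟨m, hmj⟩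
  have h1 : mj ≤ m := hmjL.2 hmj
  have h2 : m < mj := hlt j hj hj' mj hmjL
  linarith
end

section
/- Explicit structure of the k-Sharkovsky downset of k+l when k = 2l: Let l ≥ 2 and k = 2l. Then: (i) {m : m ≤_k k+l} = {1} ∪ {s·k : s ≥ 1} ∪ {j·k + l : j ≥ 1}; (ii) for every j ≥ 1, jk + l >_k (j+1)k + l; (iii) for all j ≥ 1 and s ≥ 1, jk + l >_k s·k; (iv) for s, t ≥ 1, s·k >_k t·k iff s >₂ t; and consequently the restriction of ≥_k to {m : m ≤_k k+l} is a total order. -/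
open Set

lemma exists_decomp (n : ℕ) (hn : n ≠ 0) : ∃ a p, Odd p ∧ n = 2 ^ a * p := by
  refine ⟨n.factorization 2, n / 2 ^ n.factorization 2, ?_,
    (Nat.ordProj_mul_ordCompl_eq_self n 2).symm⟩
  have h := Nat.not_dvd_ordCompl Nat.prime_two hn
  rw [Nat.odd_iff]
  omega

lemma shark_trichotomy (s t : ℕ) (hs : 1 ≤ s) (ht : 1 ≤ t) :
    s = t ∨ SharkGt s t ∨ SharkGt t s := by
  obtain ⟨a, p, hp, rfl⟩ := exists_decomp s (by omega)
  obtain ⟨b, q, hq, rfl⟩ := exists_decomp t (by omega)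
  have hp1 : 1 ≤ p := by have := Nat.odd_iff.mp hp; omega
  have hq1 : 1 ≤ q := by have := Nat.odd_iff.mp hq; omega
  have hp' : p = 1 ∨ 1 < p := by omega
  have hq' : q = 1 ∨ 1 < q := by omega
  rcases hp' with hp1' | hp1' <;> rcases hq' with hq1' | hq1'
  · rcases lt_trichotomy a b with h | h | h
    · right; right; exact ⟨b, q, a, p, hq, hp, rfl, rfl, Or.inr (Or.inr ⟨hq1', hp1', h⟩)⟩
    · left; rw [h, hp1', hq1']
    · right; left; exact ⟨a, p, b, q, hp, hq, rfl, rfl, Or.inr (Or.inr ⟨hp1', hq1', h⟩)⟩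
  · right; right; exact ⟨b, q, a, p, hq, hp, rfl, rfl, Or.inr (Or.inl ⟨hq1', hp1'⟩)⟩
  · right; left; exact ⟨a, p, b, q, hp, hq, rfl, rfl, Or.inr (Or.inl ⟨hp1', hq1'⟩)⟩
  · rcases lt_trichotomy a b with h | h | h
    · right; left; exact ⟨a, p, b, q, hp, hq, rfl, rfl, Or.inl ⟨hp1', hq1', Or.inl h⟩⟩
    · rcases lt_trichotomy p q with h2 | h2 | h2
      · right; right
        exact ⟨b, q, a, p, hq, hp, rfl, rfl, Or.inl ⟨hq1', hp1', Or.inr ⟨h.symm, h2⟩⟩⟩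
      · left; rw [h, h2]
      · right; left; exact ⟨a, p, b, q, hp, hq, rfl, rfl, Or.inl ⟨hp1', hq1', Or.inr ⟨h, h2⟩⟩⟩
    · right; right; exact ⟨b, q, a, p, hq, hp, rfl, rfl, Or.inl ⟨hq1', hp1', Or.inl h⟩⟩

/-- **Explicit structure of the `k`-Sharkovsky downset of `k+l` when `k = 2l`.** -/
theorem downset_k_eq_two_l (l : ℕ) (hl : 2 ≤ l) (k : ℕ) (hk : k = 2 * l) :
    ({m | 0 < m ∧ SharkLeK k m (k + l)} =
      {1} ∪ {m | ∃ s, 1 ≤ s ∧ m = s * k} ∪ {m | ∃ j, 1 ≤ j ∧ m = j * k + l}) ∧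
    (∀ j, 1 ≤ j → SharkGtK k (j * k + l) ((j + 1) * k + l)) ∧
    (∀ j s, 1 ≤ j → 1 ≤ s → SharkGtK k (j * k + l) (s * k)) ∧
    (∀ s t, 1 ≤ s → 1 ≤ t → (SharkGtK k (s * k) (t * k) ↔ SharkGt s t)) ∧
    (∀ m ∈ {m | 0 < m ∧ SharkLeK k m (k + l)},
      ∀ m' ∈ {m | 0 < m ∧ SharkLeK k m (k + l)},
        SharkLeK k m m' ∨ SharkLeK k m' m) := by
  have hk4 : 4 ≤ k := by omega
  have hndvd : ∀ j : ℕ, ¬ k ∣ (j * k + l) := by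
    intro j hdvd
    have h1 : k ∣ j * k := dvd_mul_left k j
    have h2 : k ∣ l := (Nat.dvd_add_right h1).mp hdvd
    have h3 : k ≤ l := Nat.le_of_dvd (by omega) h2
    omega
  have hjj : ∀ j j' : ℕ, j < j' → SharkGtK k (j * k + l) (j' * k + l) := by
    intro j j' h
    obtain ⟨d, rfl⟩ : ∃ d, j' = j + (d + 1) := ⟨j' - j - 1, by omega⟩
    exact Or.inr (Or.inr ⟨hndvd j, 1, d + 1, by omega, by ring⟩)
  have hiii : ∀ j s : ℕ, 1 ≤ s → SharkGtK k (j * k + l) (s * k) := by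
    intro j s hs
    exact Or.inr (Or.inr ⟨hndvd j, 0, s, hs, by ring⟩)
  have hiv : ∀ s t, 1 ≤ s → 1 ≤ t → (SharkGtK k (s * k) (t * k) ↔ SharkGt s t) := by
    intro s t hs ht
    constructor
    · rintro (⟨h1, _⟩ | ⟨_, _, h⟩ | ⟨hnd, _⟩)
      · have h2 : k ≤ t * k := Nat.le_mul_of_pos_left k ht
        linarith
      · rwa [Nat.mul_div_cancel _ (by omega : 0 < k),
          Nat.mul_div_cancel _ (by omega : 0 < k)] at h
      · exact absurd (dvd_mul_left k s) hnd
    · intro h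
      exact Or.inr (Or.inl ⟨dvd_mul_left k s, dvd_mul_left k t,
        by rwa [Nat.mul_div_cancel _ (by omega : 0 < k),
          Nat.mul_div_cancel _ (by omega : 0 < k)]⟩)
  have hclass : ∀ m, 0 < m → SharkLeK k m (k + l) →
      m = 1 ∨ (∃ s, 1 ≤ s ∧ m = s * k) ∨ (∃ j, 1 ≤ j ∧ m = j * k + l) := by
    intro m hm0 hle
    rcases hle with rfl | h
    · right; right; exact ⟨1, le_rfl, by omega⟩
    rcases h with ⟨h1, _⟩ | ⟨hd, _, _⟩ | ⟨_, i, j, hj, hm⟩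
    · exact Or.inl h1
    · exact absurd (by simpa using hd) (hndvd 1)
    · rcases Nat.even_or_odd i with ⟨a, ha⟩ | ⟨a, ha⟩
      · subst hk ha hm
        right; left
        exact ⟨3 * a + j, by omega, by ring⟩
      · subst hk ha hm
        right; right
        exact ⟨3 * a + 1 + j, by omega, by ring⟩
  have hgt1 : ∀ s, 1 ≤ s → 1 < s * k := by
    intro s hs
    calc (1 : ℕ) < k := by omega
    _ ≤ s * k := Nat.le_mul_of_pos_left k hs
  have hgt1' : ∀ j : ℕ, 1 < j * k + l :=
    fun j => Nat.lt_of_lt_of_le (by omega : 1 < l) (Nat.le_add_left l _)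
  refine ⟨?_, fun j _ => hjj j (j + 1) (by omega), fun j s _ hs => hiii j s hs, hiv, ?_⟩
  · ext m
    simp only [mem_setOf_eq, mem_union, mem_singleton_iff]
    constructor
    · rintro ⟨hm0, hmle⟩
      rcases hclass m hm0 hmle with h | h | h
      · exact Or.inl (Or.inl h)
      · exact Or.inl (Or.inr h)
      · exact Or.inr h
    · rintro ((rfl | ⟨s, hs, rfl⟩) | ⟨j, hj, rfl⟩)
      · exact ⟨one_pos, Or.inr (Or.inl ⟨rfl, by omega⟩)⟩
      · refine ⟨Nat.mul_pos (by omega) (by omega), Or.inr ?_⟩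
        have h := hiii 1 s hs
        rwa [one_mul] at h
      · refine ⟨Nat.lt_of_lt_of_le (by omega : 0 < l) (Nat.le_add_left l _), ?_⟩
        obtain ⟨d, rfl⟩ : ∃ d, j = 1 + d := ⟨j - 1, by omega⟩
        rcases Nat.eq_zero_or_pos d with rfl | hd
        · exact Or.inl (by omega)
        · refine Or.inr ?_
          have h := hjj 1 (1 + d) (by omega)
          rwa [one_mul] at h
  · rintro m ⟨hm0, hmle⟩ m' ⟨hm0', hmle'⟩
    rcases hclass m hm0 hmle with rfl | ⟨s, hs, rfl⟩ | ⟨j, hj, rfl⟩ <;>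
      rcases hclass m' hm0' hmle' with rfl | ⟨t, ht, rfl⟩ | ⟨j', hj', rfl⟩
    · exact Or.inl (Or.inl rfl)
    · exact Or.inl (Or.inr (Or.inl ⟨rfl, hgt1 t ht⟩))
    · exact Or.inl (Or.inr (Or.inl ⟨rfl, hgt1' j'⟩))
    · exact Or.inr (Or.inr (Or.inl ⟨rfl, hgt1 s hs⟩))
    · rcases shark_trichotomy s t hs ht with rfl | h | h
      · exact Or.inl (Or.inl rfl)
      · exact Or.inr (Or.inr ((hiv s t hs ht).mpr h))
      · exact Or.inl (Or.inr ((hiv t s ht hs).mpr h))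
    · exact Or.inl (Or.inr (hiii j' s hs))
    · exact Or.inr (Or.inr (Or.inl ⟨rfl, hgt1' j⟩))
    · exact Or.inr (Or.inr (hiii j t ht))
    · rcases lt_trichotomy j j' with h | rfl | h
      · exact Or.inr (Or.inr (hjj j j' h))
      · exact Or.inl (Or.inl rfl)
      · exact Or.inl (Or.inr (hjj j' j h))
end

section
/- Successive downset differences in the k-Sharkovsky order when k = 3l or 2k = 3l: Let k ≥ 3 and 0 < l < k satisfy k = 3l or 2k = 3l. Then for every integer j ≥ 1, {m : m ≤_k jk + l} \ {m : m ≤_k (j+1)k + l} = {jk + l, (2j+1)k + 2l, (2j+2)k + 2l}. -/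
open Set

private lemma aux_downset (k n d : ℕ) (hk : 3 ≤ k) (hn1 : 1 < n)
    (hkn : ¬ k ∣ n) (hk2n : ¬ k ∣ 2 * n) (hd : 4 ≤ d) (h3n : 3 * n = d * k) :
    {m | 0 < m ∧ SharkLeK k m n} \ {m | 0 < m ∧ SharkLeK k m (n + k)} =
      {n, 2 * n + k, 2 * n + 2 * k} := by
  have hknk : ¬ k ∣ n + k := fun h => hkn (by simpa using Nat.dvd_sub h (dvd_refl k))
  have mem' : ∀ i' s', i' + 1 ≤ s' → SharkLeK k (i' * n + s' * k) (n + k) := by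
    intro i' s' h
    obtain ⟨e, he⟩ : ∃ e, s' = i' + e + 1 := ⟨s' - i' - 1, by omega⟩
    subst he
    exact Or.inr (Or.inr (Or.inr ⟨hknk, i', e + 1, by omega, by ring⟩))
  have hQ : ∀ s : ℕ, 1 ≤ s → k ≤ s * k := fun s hs =>
    Nat.le_mul_of_pos_left k (by omega)
  ext m
  simp only [Set.mem_diff, Set.mem_setOf_eq, Set.mem_insert_iff, Set.mem_singleton_iff,
    not_and]
  constructor
  · rintro ⟨⟨hm0, hle⟩, hnot⟩
    have hnle : ¬ SharkLeK k m (n + k) := fun h => hnot hm0 h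
    rcases hle with rfl | hgt
    · exact Or.inl rfl
    rcases hgt with ⟨rfl, -⟩ | ⟨hkd, -⟩ | ⟨-, i, s, hs, hm⟩
    · exact absurd (Or.inr (Or.inl ⟨rfl, by omega⟩)) hnle
    · exact absurd hkd hkn
    by_cases his : i + 1 ≤ s
    · exact absurd (by rw [hm]; exact mem' i s his) hnle
    by_cases hi3 : 3 ≤ i
    · have hred : m = (i % 3) * n + (s + (i / 3) * d) * k := by
        calc m = i * n + s * k := hm
          _ = (3 * (i / 3) + i % 3) * n + s * k := by rw [Nat.div_add_mod]
          _ = (i / 3) * (3 * n) + ((i % 3) * n + s * k) := by ring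
          _ = (i / 3) * (d * k) + ((i % 3) * n + s * k) := by rw [h3n]
          _ = (i % 3) * n + (s + (i / 3) * d) * k := by ring
      have h2 : 1 ≤ i / 3 := (Nat.one_le_div_iff (by norm_num)).mpr hi3
      have h4 : 1 * 4 ≤ (i / 3) * d := Nat.mul_le_mul h2 hd
      have hlt : i % 3 < 3 := Nat.mod_lt _ (by norm_num)
      exact absurd (by rw [hred]; exact mem' (i % 3) (s + (i / 3) * d) (by omega)) hnle
    have hi1 : 1 ≤ i := by omega
    have hi2 : i ≤ 2 := by omega
    interval_cases i
    · -- i = 1, so s = 1 and m = n + k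
      have hs1 : s = 1 := by omega
      subst hs1
      exact absurd (Or.inl (by omega)) hnle
    · -- i = 2, so s = 1 or s = 2
      have hss : s = 1 ∨ s = 2 := by omega
      rcases hss with rfl | rfl
      · exact Or.inr (Or.inl (by omega))
      · exact Or.inr (Or.inr (by omega))
  · rintro (hm' | hm' | hm')
    · refine ⟨⟨by omega, Or.inl hm'⟩, ?_⟩
      intro _ h
      rcases h with heq | ⟨h1, -⟩ | ⟨hkd, -⟩ | ⟨-, i, s, hs, hm⟩
      · omega
      · omega
      · exact hknk hkd
      · by_cases hi : 3 ≤ i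
        · have h1 := Nat.mul_le_mul_right (n + k) hi
          have h2 := hQ s hs
          omega
        · interval_cases i
          · exact hkn ⟨s, by rw [mul_comm k s]; omega⟩
          · have h2 := hQ s hs; omega
          · have h2 := hQ s hs; omega
    · refine ⟨⟨by omega,
        Or.inr (Or.inr (Or.inr ⟨hkn, 2, 1, le_refl 1, by rw [hm']; ring⟩))⟩, ?_⟩
      intro _ h
      rcases h with heq | ⟨h1, -⟩ | ⟨hkd, -⟩ | ⟨-, i, s, hs, hm⟩
      · omega
      · omega
      · exact hknk hkd
      · by_cases hi : 3 ≤ i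
        · have h1 := Nat.mul_le_mul_right (n + k) hi
          have h2 := hQ s hs
          omega
        · interval_cases i
          · refine hk2n ?_
            obtain ⟨s', rfl⟩ : ∃ s', s = s' + 1 := ⟨s - 1, by omega⟩
            have e : (s' + 1) * k = s' * k + k := by ring
            exact ⟨s', by rw [mul_comm k s']; omega⟩
          · exact hkn ⟨s, by rw [mul_comm k s]; omega⟩
          · have h2 := hQ s hs; omega
    · refine ⟨⟨by omega,
        Or.inr (Or.inr (Or.inr ⟨hkn, 2, 2, by norm_num, by rw [hm']⟩))⟩, ?_⟩
      intro _ h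
      rcases h with heq | ⟨h1, -⟩ | ⟨hkd, -⟩ | ⟨-, i, s, hs, hm⟩
      · omega
      · omega
      · exact hknk hkd
      · by_cases hi : 3 ≤ i
        · have h1 := Nat.mul_le_mul_right (n + k) hi
          have h2 := hQ s hs
          omega
        · interval_cases i
          · refine hk2n ?_
            have hs2 : s = 1 ∨ 2 ≤ s := by omega
            rcases hs2 with rfl | hs2
            · omega
            · obtain ⟨s', rfl⟩ : ∃ s', s = s' + 2 := ⟨s - 2, by omega⟩
              have e : (s' + 2) * k = s' * k + 2 * k := by ring
              exact ⟨s', by rw [mul_comm k s']; omega⟩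
          · exact hknk ⟨s, by rw [mul_comm k s]; omega⟩
          · have h2 := hQ s hs; omega

/-- **Successive downset differences when `k = 3l` or `2k = 3l`.** -/
theorem downset_difference (k l : ℕ) (hk : 3 ≤ k) (hl0 : 0 < l) (hlk : l < k)
    (h3 : k = 3 * l ∨ 2 * k = 3 * l) (j : ℕ) (hj : 1 ≤ j) :
    {m | 0 < m ∧ SharkLeK k m (j * k + l)} \
        {m | 0 < m ∧ SharkLeK k m ((j + 1) * k + l)} =
      {j * k + l, (2 * j + 1) * k + 2 * l, (2 * j + 2) * k + 2 * l} := by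
  have hkn : ¬ k ∣ j * k + l := by
    intro h
    have h1 : k ∣ l := (Nat.dvd_add_right ⟨j, mul_comm j k⟩).mp h
    have := Nat.le_of_dvd hl0 h1
    omega
  have hk2n : ¬ k ∣ 2 * (j * k + l) := by
    intro h
    have e : 2 * (j * k + l) = (2 * j) * k + 2 * l := by ring
    rw [e] at h
    have h1 : k ∣ 2 * l := (Nat.dvd_add_right ⟨2 * j, mul_comm (2 * j) k⟩).mp h
    obtain ⟨t, ht⟩ := h1
    have htc : t = 0 ∨ t = 1 ∨ 2 ≤ t := by omega
    rcases htc with rfl | rfl | htc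
    · omega
    · rcases h3 with h3 | h3 <;> omega
    · obtain ⟨u, rfl⟩ : ∃ u, t = u + 2 := ⟨t - 2, by omega⟩
      have e2 : k * (u + 2) = k * u + 2 * k := by ring
      omega
  obtain ⟨d, hd4, hdk⟩ : ∃ d, 4 ≤ d ∧ 3 * (j * k + l) = d * k := by
    rcases h3 with h3 | h3
    · refine ⟨3 * j + 1, by omega, ?_⟩
      calc 3 * (j * k + l) = 3 * j * k + 3 * l := by ring
        _ = 3 * j * k + k := by rw [← h3]
        _ = (3 * j + 1) * k := by ring
    · refine ⟨3 * j + 2, by omega, ?_⟩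
      calc 3 * (j * k + l) = 3 * j * k + 3 * l := by ring
        _ = 3 * j * k + 2 * k := by rw [← h3]
        _ = (3 * j + 2) * k := by ring
  have hn1 : 1 < j * k + l := by
    have : k ≤ j * k := Nat.le_mul_of_pos_left k (by omega)
    omega
  have e1 : (j + 1) * k + l = (j * k + l) + k := by ring
  have e2 : (2 * j + 1) * k + 2 * l = 2 * (j * k + l) + k := by ring
  have e3 : (2 * j + 2) * k + 2 * l = 2 * (j * k + l) + 2 * k := by ring
  rw [e1, e2, e3]
  exact aux_downset k (j * k + l) d hk hn1 hkn hk2n hd4 hdk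
end

section
/- Frobenius-type description of the k-Sharkovsky downset of k+l: Let k ≥ 3 and 0 < l < k, and set d = gcd(k, l). Then every positive integer n that is divisible by d and satisfies n > (k/d − 1)(k + l) satisfies k + l >_k n; equivalently, every such n is of the form n = s·k + t·(k+l) with integers s ≥ 1 and t ≥ 0. -/
open Set

/-- **Frobenius-type description of the `k`-Sharkovsky downset of `k+l`.** With
`d = gcd(k,l)`, every positive multiple `n` of `d` with `n > (k/d - 1)(k + l)` satisfies
`k + l >_k n`, and is of the form `n = s·k + t·(k+l)` with `s ≥ 1`, `t ≥ 0`. -/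
theorem downset_frobenius (k l : ℕ) (hk : 3 ≤ k) (hl0 : 0 < l) (hlk : l < k) :
    ∀ n : ℕ, 0 < n → Nat.gcd k l ∣ n → (k / Nat.gcd k l - 1) * (k + l) < n →
      SharkGtK k (k + l) n ∧ ∃ s t : ℕ, 1 ≤ s ∧ n = s * k + t * (k + l) := by
  intro n hn hdn hbig
  set d := Nat.gcd k l with hd
  have hd0 : 0 < d := Nat.gcd_pos_of_pos_left _ (by omega)
  have hdk : d ∣ k := Nat.gcd_dvd_left k l
  have hdl : d ∣ l := Nat.gcd_dvd_right k l
  have hdkl : d ∣ (k + l) := Dvd.dvd.add hdk hdl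
  set k' := k / d with hk'
  set m := (k + l) / d with hm
  have hk'0 : 0 < k' := Nat.div_pos (Nat.le_of_dvd (by omega) hdk) hd0
  have hdm : d * m = k + l := Nat.mul_div_cancel' hdkl
  have hdk'' : d * k' = k := Nat.mul_div_cancel' hdk
  have hgkl : Nat.gcd k (k + l) = d := by
    rw [hd, add_comm k l, Nat.gcd_add_self_right]
  have hcop : Nat.Coprime k' m := by
    have := Nat.coprime_div_gcd_div_gcd (m := k) (n := k + l) (by rw [hgkl]; exact hd0)
    rwa [hgkl] at this
  haveI : NeZero k' := ⟨hk'0.ne'⟩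
  have hunit : IsUnit (m : ZMod k') := by
    rw [ZMod.isUnit_iff_coprime]
    exact hcop.symm
  set t := (((n / d : ℕ) : ZMod k') * ((m : ZMod k'))⁻¹).val with ht
  have htlt : t < k' := ZMod.val_lt _
  have htm : ((t * m : ℕ) : ZMod k') = ((n / d : ℕ) : ZMod k') := by
    push_cast
    rw [ht, ZMod.natCast_val, ZMod.cast_id, mul_assoc, ZMod.inv_mul_of_unit _ hunit, mul_one]
  have hndd : d * (n / d) = n := Nat.mul_div_cancel' hdn
  have hnd_big : (k' - 1) * m < n / d := by
    have h1 : (k' - 1) * (k + l) < n := hbig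
    have h2 : d * ((k' - 1) * m) < d * (n / d) := by
      rw [hndd]
      calc d * ((k' - 1) * m) = (k' - 1) * (d * m) := by ring
        _ = (k' - 1) * (k + l) := by rw [hdm]
        _ < n := h1
    exact Nat.lt_of_mul_lt_mul_left h2
  have htm_lt : t * m < n / d := by
    calc t * m ≤ (k' - 1) * m := Nat.mul_le_mul_right _ (by omega)
      _ < n / d := hnd_big
  have hmod : t * m ≡ n / d [MOD k'] := (ZMod.natCast_eq_natCast_iff _ _ _).mp htm
  have hdvd : k' ∣ (n / d - t * m) := (Nat.modEq_iff_dvd' htm_lt.le).mp hmod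
  obtain ⟨s, hs⟩ := hdvd
  have hs1 : 1 ≤ s := by
    rcases Nat.eq_zero_or_pos s with h | h
    · subst h; simp at hs; omega
    · exact h
  have hrep : n = t * (k + l) + s * k := by
    have : n / d = t * m + k' * s := by omega
    calc n = d * (n / d) := hndd.symm
      _ = d * (t * m + k' * s) := by rw [this]
      _ = t * (d * m) + s * (d * k') := by ring
      _ = t * (k + l) + s * k := by rw [hdm, hdk'']
  have hknd : ¬ k ∣ (k + l) := by
    intro h
    have : k ∣ l := (Nat.dvd_add_right (dvd_refl k)).mp h
    exact absurd (Nat.le_of_dvd hl0 this) (by omega)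
  refine ⟨Or.inr (Or.inr ⟨hknd, t, s, hs1, hrep⟩), s, t, hs1, by rw [hrep]; exact Nat.add_comm _ _⟩
end
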